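/- In the down-up algebra A(α,β,0) with r₁ ≠ 0, for all k ≥ 0 one has d·u^k = (φ_{k-1}/r₁)·u^{k-1}·w₁ + r₂^k·u^k·d, where φ_p = ∑_{i=0}^p r₁^i r₂^{p-i} and φ_{-1} = 0. -/

import Mathlib

noncomputable section

open FreeAlgebra

/-- The defining relations of the down-up algebra `A(α,β,γ)`:
generator `0` is `u`, generator `1` is `d`. -/
inductive DownUpRel (K : Type) [Field K] (α β γ : K) :
    FreeAlgebra K (Fin 2) → FreeAlgebra K (Fin 2) → Prop
  | rel1 : DownUpRel K α β γ
      (ι K 1 * ι K 1 * ι K 0)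
      (α • (ι K 1 * ι K 0 * ι K 1) + β • (ι K 0 * ι K 1 * ι K 1) + γ • ι K 1)
  | rel2 : DownUpRel K α β γ
      (ι K 1 * ι K 0 * ι K 0)
      (α • (ι K 0 * ι K 1 * ι K 0) + β • (ι K 0 * ι K 0 * ι K 1) + γ • ι K 0)

/-- The down-up algebra `A(α,β,γ)` of Benkart–Roby. -/
abbrev DownUp (K : Type) [Field K] (α β γ : K) : Type :=
  RingQuot (DownUpRel K α β γ)

/-- The generator `u` of the down-up algebra. -/
def DownUp.u (K : Type) [Field K] (α β γ : K) : DownUp K α β γ :=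
  RingQuot.mkAlgHom K _ (ι K 0)

/-- The generator `d` of the down-up algebra. -/
def DownUp.d (K : Type) [Field K] (α β γ : K) : DownUp K α β γ :=
  RingQuot.mkAlgHom K _ (ι K 1)

/-- `φ_p = ∑_{i=0}^p r₁^i r₂^(p-i)`. -/
def phi (K : Type) [Field K] (r₁ r₂ : K) (p : ℕ) : K :=
  ∑ i ∈ Finset.range (p + 1), r₁ ^ i * r₂ ^ (p - i)

/-- `φ_{k-1}`, with the convention `φ_{-1} = 0` (for `k = 0`). -/
def phiPred (K : Type) [Field K] (r₁ r₂ : K) (k : ℕ) : K :=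
  if k = 0 then 0 else phi K r₁ r₂ (k - 1)

/-!
Since `r₁` is a root of `t² - αt - β`, the second defining relation gives `w₁ u = r₁ u w₁`, while
`d u = w₁ / r₁ + r₂ u d` because `β = -r₁ r₂`. Moving `d` past `u^(k+1)` one `u` at a
time, the coefficient of `u^k w₁` obeys the recursion `φ_(k+1) = r₁ φ_k + r₂^(k+1)`.
-/

theorem phi_succ (K : Type) [Field K] (r₁ r₂ : K) (k : ℕ) :
    phi K r₁ r₂ (k + 1) = r₁ * phi K r₁ r₂ k + r₂ ^ (k + 1) := by
  simp only [phi, Finset.sum_range_succ' _ (k + 1), Nat.add_sub_add_right, pow_succ', mul_assoc,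
    ← Finset.mul_sum, pow_zero, one_mul, Nat.sub_zero]

theorem mul_pow_succ_eq_phi_smul_add {K A : Type} [Field K] [Semiring A] [Algebra K A]
    {u d w : A} {c r₁ r₂ : K} (hdu : d * u = c • w + r₂ • (u * d))
    (hwu : w * u = r₁ • (u * w)) (k : ℕ) :
    d * u ^ (k + 1) = (c * phi K r₁ r₂ k) • (u ^ k * w) + r₂ ^ (k + 1) • (u ^ (k + 1) * d) := by
  induction k with
  | zero => simpa [phi] using hdu
  | succ k ih =>
    calc d * u ^ (k + 2)
        = (c * phi K r₁ r₂ k) • (u ^ k * (w * u)) + r₂ ^ (k + 1) • (u ^ (k + 1) * (d * u)) := by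
          rw [pow_succ u (k + 1), ← mul_assoc, ih, add_mul, smul_mul_assoc, smul_mul_assoc,
            mul_assoc, mul_assoc]
      _ = (c * phi K r₁ r₂ (k + 1)) • (u ^ (k + 1) * w) + r₂ ^ (k + 2) • (u ^ (k + 2) * d) := by
          rw [hwu, hdu, phi_succ]
          simp only [mul_add, mul_smul_comm, smul_add, smul_smul, ← mul_assoc, ← pow_succ]
          match_scalars <;> ring

namespace DownUp

variable {K : Type} [Field K] {α β γ : K}

theorem d_mul_u_mul_u :
    d K α β γ * (u K α β γ * u K α β γ) =
      α • (u K α β γ * (d K α β γ * u K α β γ)) + β • (u K α β γ * (u K α β γ * d K α β γ)) +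
        γ • u K α β γ := by
  have h := RingQuot.mkAlgHom_rel K (DownUpRel.rel2 (K := K) (α := α) (β := β) (γ := γ))
  simp only [map_mul, map_add, map_smul, mul_assoc] at h
  exact h

theorem w_mul_u {r : K} (hr : r ^ 2 = α * r + β) :
    (β • (u K α β 0 * d K α β 0) + r • (d K α β 0 * u K α β 0)) * u K α β 0 =
      r • (u K α β 0 * (β • (u K α β 0 * d K α β 0) + r • (d K α β 0 * u K α β 0))) := by
  simp only [add_mul, smul_mul_assoc, mul_add, mul_smul_comm, mul_assoc, d_mul_u_mul_u, zero_smul,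
    add_zero, smul_add, smul_smul]
  match_scalars
  · linear_combination -hr
  · ring

end DownUp

theorem downUp_d_mul_u_pow_general (K : Type) [Field K] (α β r₁ r₂ : K)
    (hr₁ : r₁ ≠ 0) (hsum : α = r₁ + r₂) (hprod : β = -(r₁ * r₂)) :
    let u := DownUp.u K α β 0
    let d := DownUp.d K α β 0
    let w₁ := β • (u * d) + r₁ • (d * u)
    ∀ k : ℕ,
      d * u ^ k =
        (phiPred K r₁ r₂ k / r₁) • (u ^ (k - 1) * w₁) + r₂ ^ k • (u ^ k * d) := by
  intro u d w₁ k
  have hwu : w₁ * u = r₁ • (u * w₁) :=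
    DownUp.w_mul_u (by rw [hsum, hprod]; ring)
  have hdu : d * u = r₁⁻¹ • w₁ + r₂ • (u * d) := by
    simp only [w₁, hprod, smul_add, smul_smul]
    match_scalars <;> simp [hr₁]
  cases k with
  | zero => simp [phiPred]
  | succ k =>
    rw [mul_pow_succ_eq_phi_smul_add hdu hwu k, phiPred, if_neg k.succ_ne_zero, Nat.add_sub_cancel,
      inv_mul_eq_div]

/-- In `A(α,β,0)` with `r₁ ≠ 0`:
`d·u^k = (φ_{k-1}/r₁)·u^{k-1}·w₁ + r₂^k·u^k·d` for all `k ≥ 0`. -/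
theorem downUp_d_mul_u_pow (K : Type) [Field K] [CharZero K] (α β r₁ r₂ : K)
    (hr₁ : r₁ ≠ 0) (hsum : α = r₁ + r₂) (hprod : β = -(r₁ * r₂)) :
    let u := DownUp.u K α β 0
    let d := DownUp.d K α β 0
    let w₁ := β • (u * d) + r₁ • (d * u)
    ∀ k : ℕ,
      d * u ^ k =
        (phiPred K r₁ r₂ k / r₁) • (u ^ (k - 1) * w₁) + r₂ ^ k • (u ^ k * d) :=
  downUp_d_mul_u_pow_general K α β r₁ r₂ hr₁ hsum hprod
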